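/- Let A be a *-algebra over a field containing ℚ[i] and V an A-*-bimodule. Since w_n ∘ b = (-1)^n b ∘ w_{n-1}, the Hochschild cochain complex splits into the ±1-eigenspace subcomplexes of the (suitably sign-adjusted) involution, and consequently HH^•(A,V) ≅ HH^•_+(A,V) ⊕ HH^•_−(A,V). -/

import Mathlib

/- STATEMENT 2: Let A be a *-algebra over a field containing ℚ[i] and V an A-*-bimodule.
Since w_n ∘ b = (-1)^n b ∘ w_{n-1}, the Hochschild cochain complex splits into the
±1-eigenspace subcomplexes of the (suitably sign-adjusted) involution, and consequently
HH^•(A,V) ≅ HH^•₊(A,V) ⊕ HH^•₋(A,V). -/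

open MulOpposite

section

variable (A V : Type*)
variable [Ring A] [StarRing A]
variable [AddCommGroup V] [Module A V] [Module Aᵐᵒᵖ V] [StarAddMonoid V]

/-- Hochschild cochains of degree `m` with values in the bimodule `V`. -/
abbrev Cochain (m : ℕ) : Type _ := (Fin m → A) → V

variable {A V}

/-- The Hochschild coface maps. -/
noncomputable def hochFace (m : ℕ) (i : ℕ) (φ : Cochain A V m) : Cochain A V (m + 1) :=
  fun a =>
    if i = 0 then a 0 • φ (fun j => a j.succ)
    else if i = m + 1 then op (a (Fin.last m)) • φ (fun j => a j.castSucc)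
    else φ (fun j =>
      if (j : ℕ) + 1 < i then a j.castSucc
      else if (j : ℕ) + 1 = i then a j.castSucc * a j.succ
      else a j.succ)

/-- The Hochschild coboundary `b`. -/
noncomputable def hochB (m : ℕ) (φ : Cochain A V m) : Cochain A V (m + 1) :=
  fun a => ∑ i ∈ Finset.range (m + 2), ((-1 : ℤ) ^ i) • hochFace m i φ a

set_option linter.unusedSectionVars false

lemma hochFace_add (m i : ℕ) (φ ψ : Cochain A V m) :
    hochFace m i (φ + ψ) = hochFace m i φ + hochFace m i ψ := by
  funext a
  simp only [hochFace, Pi.add_apply]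
  split_ifs <;> simp [smul_add]

lemma hochB_add (m : ℕ) (φ ψ : Cochain A V m) :
    hochB m (φ + ψ) = hochB m φ + hochB m ψ := by
  funext a
  simp only [hochB, hochFace_add, Pi.add_apply, smul_add, Finset.sum_add_distrib]

variable (A V)

/-- The Hochschild coboundary as an additive map. -/
noncomputable def bHom (m : ℕ) : Cochain A V m →+ Cochain A V (m + 1) :=
  AddMonoidHom.mk' (hochB m) (hochB_add m)

variable {A V}

/-- The involution `(w_n φ)(a_1,...,a_n) = φ(a_n*, ..., a_1*)*`. -/
noncomputable def hochW (n : ℕ) (φ : Cochain A V n) : Cochain A V n :=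
  fun a => star (φ (fun j => star (a (Fin.rev j))))

/-- The sign-adjusted involution `W_n = (-1)^{n(n+1)/2} w_n`, which commutes with `b`. -/
noncomputable def hochWadj (n : ℕ) (φ : Cochain A V n) : Cochain A V n :=
  ((-1 : ℤ) ^ (n * (n + 1) / 2)) • hochW n φ

lemma hochWadj_add (n : ℕ) (φ ψ : Cochain A V n) :
    hochWadj n (φ + ψ) = hochWadj n φ + hochWadj n ψ := by
  funext a
  simp [hochWadj, hochW, smul_add]

variable (A V)

/-- The sign-adjusted involution as an additive map. -/
noncomputable def WHom (n : ℕ) : Cochain A V n →+ Cochain A V n :=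
  AddMonoidHom.mk' (hochWadj n) (hochWadj_add n)

/-- Cocycles. -/
noncomputable def Zgrp (n : ℕ) : AddSubgroup (Cochain A V n) := (bHom A V n).ker

/-- Coboundaries (`⊥` in degree `0`). -/
noncomputable def Bgrp : ∀ n : ℕ, AddSubgroup (Cochain A V n)
  | 0 => ⊥
  | m + 1 => (bHom A V m).range

/-- The `+1`-eigenspace of the sign-adjusted involution. -/
noncomputable def Pgrp (n : ℕ) : AddSubgroup (Cochain A V n) :=
  (WHom A V n - AddMonoidHom.id _).ker

/-- The `-1`-eigenspace of the sign-adjusted involution. -/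
noncomputable def Mgrp (n : ℕ) : AddSubgroup (Cochain A V n) :=
  (WHom A V n + AddMonoidHom.id _).ker

/-- Hochschild cohomology `HH^n(A, V)`. -/
abbrev HH (n : ℕ) : Type _ :=
  ↥(Zgrp A V n) ⧸ ((Bgrp A V n).addSubgroupOf (Zgrp A V n))

/-- Coboundaries coming from the `+1`-eigenspace subcomplex. -/
noncomputable def BgrpP : ∀ n : ℕ, AddSubgroup (Cochain A V n)
  | 0 => ⊥
  | m + 1 => (Pgrp A V m).map (bHom A V m)

/-- Coboundaries coming from the `-1`-eigenspace subcomplex. -/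
noncomputable def BgrpM : ∀ n : ℕ, AddSubgroup (Cochain A V n)
  | 0 => ⊥
  | m + 1 => (Mgrp A V m).map (bHom A V m)

/-- The cohomology `HH^n₊(A,V)` of the `+1`-eigenspace subcomplex. -/
abbrev HHplus (n : ℕ) : Type _ :=
  ↥(Zgrp A V n ⊓ Pgrp A V n) ⧸ ((BgrpP A V n).addSubgroupOf (Zgrp A V n ⊓ Pgrp A V n))

/-- The cohomology `HH^n₋(A,V)` of the `-1`-eigenspace subcomplex. -/
abbrev HHminus (n : ℕ) : Type _ :=
  ↥(Zgrp A V n ⊓ Mgrp A V n) ⧸ ((BgrpM A V n).addSubgroupOf (Zgrp A V n ⊓ Mgrp A V n))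

end

/-! Conjugating by `*` and reversing the arguments exchanges the `i`-th coface map with the
`(m + 1 - i)`-th one (at the two ends this is where `*` intertwines the left and right actions),
so `w ∘ b = (-1)^(m+1) b ∘ w`; the sign `(-1)^(n(n+1)/2)` turns this into `W ∘ b = b ∘ W`.
As `2` is invertible, `e = (1 + W)/2` is an idempotent with image the `+1`-eigenspace and kernel
the `-1`-eigenspace. It commutes with `b`, so it preserves cocycles and coboundaries, and an
eigen-coboundary `b ψ` is also `b (e ψ)` or `b (ψ - e ψ)`. Splitting cocycles as
`x ↦ (e x, x - e x)` therefore splits cohomology. -/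

section Idempotent

variable {G : Type*} [AddCommGroup G] {e : G →+ G} {P M : AddSubgroup G}

theorem AddSubgroup.isCompl_of_idempotent (he : ∀ x, e (e x) = e x)
    (hP : ∀ x, x ∈ P ↔ e x = x) (hM : ∀ x, x ∈ M ↔ e x = 0) : IsCompl P M := by
  constructor
  · rw [AddSubgroup.disjoint_def]
    intro x hxP hxM
    rw [← (hP x).mp hxP, (hM x).mp hxM]
  · rw [codisjoint_iff_le_sup]
    intro x _
    refine AddSubgroup.mem_sup.mpr ⟨e x, (hP _).mpr (he x), x - e x, (hM _).mpr ?_, ?_⟩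
    · rw [map_sub, he, sub_self]
    · abel

def AddSubgroup.infProdEquivOfIdempotent (he : ∀ x, e (e x) = e x)
    (hP : ∀ x, x ∈ P ↔ e x = x) (hM : ∀ x, x ∈ M ↔ e x = 0)
    (Z : AddSubgroup G) (hZ : ∀ x ∈ Z, e x ∈ Z) : Z ≃+ ↥(Z ⊓ P) × ↥(Z ⊓ M) where
  toFun x := (⟨e x, hZ x x.2, (hP _).mpr (he x)⟩,
    ⟨x - e x, Z.sub_mem x.2 (hZ x x.2), (hM _).mpr (by rw [map_sub, he, sub_self])⟩)
  invFun p := ⟨p.1 + p.2, Z.add_mem p.1.2.1 p.2.2.1⟩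
  left_inv x := Subtype.ext (add_sub_cancel _ _)
  right_inv p := by
    have h1 : e p.1 = p.1 := (hP _).mp p.1.2.2
    have h2 : e p.2 = 0 := (hM _).mp p.2.2.2
    ext <;> simp [h1, h2]
  map_add' x y := by
    ext
    · simp only [AddSubgroup.coe_add, map_add, Prod.fst_add]
    · simp only [AddSubgroup.coe_add, map_add, Prod.snd_add]
      abel

theorem AddSubgroup.map_infProdEquivOfIdempotent (he : ∀ x, e (e x) = e x)
    (hP : ∀ x, x ∈ P ↔ e x = x) (hM : ∀ x, x ∈ M ↔ e x = 0)
    {Z B : AddSubgroup G} (hZ : ∀ x ∈ Z, e x ∈ Z) (hB : ∀ x ∈ B, e x ∈ B) :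
    (B.addSubgroupOf Z).map (infProdEquivOfIdempotent he hP hM Z hZ : Z →+ _) =
      ((B ⊓ P).addSubgroupOf (Z ⊓ P)).prod ((B ⊓ M).addSubgroupOf (Z ⊓ M)) := by
  rw [AddSubgroup.map_equiv_eq_comap_symm]
  ext ⟨p, q⟩
  simp only [AddSubgroup.mem_comap, AddSubgroup.mem_prod, AddSubgroup.mem_addSubgroupOf,
    AddSubgroup.mem_inf]
  refine ⟨fun hpq => ?_, fun ⟨hp, hq⟩ => B.add_mem hp.1 hq.1⟩
  replace hpq : (p : G) + q ∈ B := hpq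
  have hp : (p : G) ∈ B := by simpa [(hP _).mp p.2.2, (hM _).mp q.2.2] using hB _ hpq
  exact ⟨⟨hp, p.2.2⟩, add_sub_cancel_left (p : G) q ▸ B.sub_mem hpq hp, q.2.2⟩

def AddSubgroup.quotientEquivProdOfIdempotent (he : ∀ x, e (e x) = e x)
    (hP : ∀ x, x ∈ P ↔ e x = x) (hM : ∀ x, x ∈ M ↔ e x = 0)
    {Z B : AddSubgroup G} (hZ : ∀ x ∈ Z, e x ∈ Z) (hB : ∀ x ∈ B, e x ∈ B) :
    Z ⧸ B.addSubgroupOf Z ≃+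
      (↥(Z ⊓ P) ⧸ (B ⊓ P).addSubgroupOf (Z ⊓ P)) ×
        (↥(Z ⊓ M) ⧸ (B ⊓ M).addSubgroupOf (Z ⊓ M)) :=
  (QuotientAddGroup.congr _ _ _ (map_infProdEquivOfIdempotent he hP hM hZ hB)).trans
    (QuotientAddGroup.prodAddEquiv _ _)

end Idempotent

section Involution

variable {k G H : Type*} [DivisionRing k]
  [AddCommGroup G] [Module k G] [AddCommGroup H] [Module k H]

variable (k) in
def plusProj (W : G →+ G) : G →+ G where
  toFun x := (2⁻¹ : k) • (x + W x)
  map_zero' := by simp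
  map_add' x y := by simp only [map_add, ← smul_add]; congr 1; abel

variable {W : G →+ G}

lemma plusProj_apply (x : G) : plusProj k W x = (2⁻¹ : k) • (x + W x) := rfl

lemma map_two_inv_smul (f : G →+ H) (x : G) : f ((2⁻¹ : k) • x) = (2⁻¹ : k) • f x := by
  simpa using map_inv_natCast_smul f k k 2 x

lemma map_plusProj {WH : H →+ H} (f : G →+ H) (hf : ∀ x, WH (f x) = f (W x)) (x : G) :
    f (plusProj k W x) = plusProj k WH (f x) := by
  rw [plusProj_apply, plusProj_apply, map_two_inv_smul, map_add, hf]

lemma plusProj_mem_ker {WH : H →+ H} {f : G →+ H} (hf : ∀ x, WH (f x) = f (W x)) {x : G}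
    (hx : x ∈ f.ker) : plusProj k W x ∈ f.ker := by
  rw [AddMonoidHom.mem_ker] at hx ⊢
  rw [map_plusProj f hf, hx, map_zero]

lemma plusProj_mem_range {WH : H →+ H} {f : G →+ H} (hf : ∀ x, WH (f x) = f (W x)) {y : H}
    (hy : y ∈ f.range) : plusProj k WH y ∈ f.range := by
  obtain ⟨x, rfl⟩ := hy
  exact ⟨plusProj k W x, map_plusProj f hf x⟩

lemma mem_ker_sub_id_iff [CharZero k] (x : G) :
    x ∈ (W - AddMonoidHom.id G).ker ↔ plusProj k W x = x := by
  rw [AddMonoidHom.mem_ker, AddMonoidHom.sub_apply, AddMonoidHom.id_apply, sub_eq_zero,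
    plusProj_apply, inv_smul_eq_iff₀ two_ne_zero, two_smul, add_right_inj]

lemma mem_ker_add_id_iff [CharZero k] (x : G) :
    x ∈ (W + AddMonoidHom.id G).ker ↔ plusProj k W x = 0 := by
  rw [AddMonoidHom.mem_ker, AddMonoidHom.add_apply, AddMonoidHom.id_apply, plusProj_apply,
    smul_eq_zero_iff_right (inv_ne_zero two_ne_zero), add_comm]

lemma plusProj_plusProj [CharZero k] (hW : ∀ x, W (W x) = x) (x : G) :
    plusProj k W (plusProj k W x) = plusProj k W x := by
  refine (mem_ker_sub_id_iff _).mp ?_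
  rw [AddMonoidHom.mem_ker, AddMonoidHom.sub_apply, AddMonoidHom.id_apply, sub_eq_zero,
    map_plusProj W (fun _ => rfl), plusProj_apply, plusProj_apply, hW, add_comm]

lemma map_ker_sub_id_eq_range_inf [CharZero k] {WH : H →+ H} (hW : ∀ x, W (W x) = x)
    (f : G →+ H) (hf : ∀ x, WH (f x) = f (W x)) :
    (W - AddMonoidHom.id G).ker.map f = f.range ⊓ (WH - AddMonoidHom.id H).ker := by
  ext y
  simp only [AddSubgroup.mem_map, AddSubgroup.mem_inf, AddMonoidHom.mem_range,
    mem_ker_sub_id_iff (k := k)]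
  constructor
  · rintro ⟨x, hx, rfl⟩
    exact ⟨⟨x, rfl⟩, by rw [← map_plusProj f hf, hx]⟩
  · rintro ⟨⟨x, rfl⟩, hx⟩
    exact ⟨plusProj k W x, plusProj_plusProj hW x, by rw [map_plusProj f hf, hx]⟩

lemma map_ker_add_id_eq_range_inf [CharZero k] {WH : H →+ H} (hW : ∀ x, W (W x) = x)
    (f : G →+ H) (hf : ∀ x, WH (f x) = f (W x)) :
    (W + AddMonoidHom.id G).ker.map f = f.range ⊓ (WH + AddMonoidHom.id H).ker := by
  ext y
  simp only [AddSubgroup.mem_map, AddSubgroup.mem_inf, AddMonoidHom.mem_range,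
    mem_ker_add_id_iff (k := k)]
  constructor
  · rintro ⟨x, hx, rfl⟩
    exact ⟨⟨x, rfl⟩, by rw [← map_plusProj f hf, hx, map_zero]⟩
  · rintro ⟨⟨x, rfl⟩, hx⟩
    refine ⟨x - plusProj k W x, ?_, ?_⟩
    · rw [map_sub, plusProj_plusProj hW, sub_self]
    · rw [map_sub, map_plusProj f hf, hx, sub_zero]

end Involution

lemma neg_one_pow_sub_of_le {R : Type*} [Monoid R] [HasDistribNeg R] {m i : ℕ} (hi : i ≤ m) :
    (-1 : R) ^ (m - i) = (-1) ^ m * (-1) ^ i := by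
  conv_rhs => rw [← Nat.sub_add_cancel hi, pow_add, mul_assoc, ← pow_add, ← two_mul, pow_mul]
  simp

section Hochschild

open Finset

variable {A V : Type*} [Ring A] [StarRing A] [AddCommGroup V] [StarAddMonoid V]

lemma hochWadj_hochWadj (n : ℕ) (φ : Cochain A V n) : hochWadj n (hochWadj n φ) = φ := by
  funext a
  simp [hochWadj, hochW, smul_smul, ← pow_add, ← two_mul, pow_mul]

variable [Module A V] [Module Aᵐᵒᵖ V]

lemma star_hochFace_rev
    (hL : ∀ (a : A) (v : V), star (a • v) = op (star a) • star v)
    (hR : ∀ (a : A) (v : V), star (op a • v) = star a • star v)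
    {m i : ℕ} (hi : i ≤ m + 1) (φ : Cochain A V m) (a : Fin (m + 1) → A) :
    star (hochFace m i φ (fun j => star (a j.rev))) = hochFace m (m + 1 - i) (hochW m φ) a := by
  rcases Nat.eq_zero_or_pos i with rfl | hpos
  · simp [hochFace, hochW, hL, Fin.rev_succ]
  rcases hi.eq_or_lt with rfl | hlt
  · simp [hochFace, hochW, Fin.rev_castSucc, -MulOpposite.op_star, hR]
  simp only [hochFace, hochW, hpos.ne', hlt.ne, show m + 1 - i ≠ 0 by omega,
    show m + 1 - i ≠ m + 1 by omega, if_false]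
  congr 2
  funext j
  have hj := j.isLt
  simp only [Fin.val_rev, Fin.rev_castSucc, Fin.rev_succ]
  split_ifs <;> first | omega | simp [star_mul]

lemma hochW_hochB
    (hL : ∀ (a : A) (v : V), star (a • v) = op (star a) • star v)
    (hR : ∀ (a : A) (v : V), star (op a • v) = star a • star v)
    (m : ℕ) (φ : Cochain A V m) :
    hochW (m + 1) (hochB m φ) = ((-1 : ℤ) ^ (m + 1)) • hochB m (hochW m φ) := by
  funext a
  calc star (∑ i ∈ range (m + 2), (-1 : ℤ) ^ i • hochFace m i φ (fun j => star (a j.rev)))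
      = ∑ i ∈ range (m + 2), (-1 : ℤ) ^ i • hochFace m (m + 1 - i) (hochW m φ) a := by
        rw [star_sum]
        refine sum_congr rfl fun i hi => ?_
        rw [star_zsmul, star_hochFace_rev hL hR (Nat.lt_succ_iff.mp (mem_range.mp hi))]
    _ = ∑ i ∈ range (m + 2), (-1 : ℤ) ^ (m + 1 - i) • hochFace m i (hochW m φ) a := by
        rw [← sum_range_reflect]
        refine sum_congr rfl fun i hi => ?_
        have hi : i ≤ m + 1 := Nat.lt_succ_iff.mp (mem_range.mp hi)
        rw [show m + 2 - 1 - i = m + 1 - i by omega, Nat.sub_sub_self hi]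
    _ = (-1 : ℤ) ^ (m + 1) • hochB m (hochW m φ) a := by
        rw [hochB, smul_sum]
        refine sum_congr rfl fun i hi => ?_
        rw [neg_one_pow_sub_of_le (Nat.lt_succ_iff.mp (mem_range.mp hi)), mul_smul]

lemma hochWadj_hochB
    (hL : ∀ (a : A) (v : V), star (a • v) = op (star a) • star v)
    (hR : ∀ (a : A) (v : V), star (op a • v) = star a • star v)
    (m : ℕ) (φ : Cochain A V m) :
    hochWadj (m + 1) (hochB m φ) = hochB m (hochWadj m φ) := by
  have htri : (m + 1) * (m + 1 + 1) / 2 = m * (m + 1) / 2 + (m + 1) := by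
    rw [show (m + 1) * (m + 1 + 1) = m * (m + 1) + (m + 1) * 2 by ring,
      Nat.add_mul_div_right _ _ two_pos]
  have hb : hochB m ((-1 : ℤ) ^ (m * (m + 1) / 2) • hochW m φ) =
      (-1 : ℤ) ^ (m * (m + 1) / 2) • hochB m (hochW m φ) := map_zsmul (bHom A V m) _ _
  rw [hochWadj, hochWadj, hochW_hochB hL hR, hb, smul_smul, ← pow_add, htri, add_assoc,
    pow_add _ _ (m + 1 + (m + 1)), ← two_mul, pow_mul]
  simp

end Hochschild

section Cohomology

variable {A V : Type*} [Ring A] [StarRing A]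
  [AddCommGroup V] [Module A V] [Module Aᵐᵒᵖ V] [StarAddMonoid V]

lemma isCompl_Pgrp_Mgrp (k : Type*) [DivisionRing k] [CharZero k] [Module k V] (n : ℕ) :
    IsCompl (Pgrp A V n) (Mgrp A V n) :=
  AddSubgroup.isCompl_of_idempotent (e := plusProj k (WHom A V n))
    (plusProj_plusProj (hochWadj_hochWadj n)) mem_ker_sub_id_iff mem_ker_add_id_iff

lemma BgrpP_eq (k : Type*) [DivisionRing k] [CharZero k] [Module k V]
    (hcomm : ∀ m (φ : Cochain A V m), hochWadj (m + 1) (hochB m φ) = hochB m (hochWadj m φ))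
    (n : ℕ) : BgrpP A V n = Bgrp A V n ⊓ Pgrp A V n := by
  cases n with
  | zero => exact (bot_inf_eq _).symm
  | succ m =>
    exact map_ker_sub_id_eq_range_inf (k := k) (hochWadj_hochWadj m) (bHom A V m) (hcomm m)

lemma BgrpM_eq (k : Type*) [DivisionRing k] [CharZero k] [Module k V]
    (hcomm : ∀ m (φ : Cochain A V m), hochWadj (m + 1) (hochB m φ) = hochB m (hochWadj m φ))
    (n : ℕ) : BgrpM A V n = Bgrp A V n ⊓ Mgrp A V n := by
  cases n with
  | zero => exact (bot_inf_eq _).symm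
  | succ m =>
    exact map_ker_add_id_eq_range_inf (k := k) (hochWadj_hochWadj m) (bHom A V m) (hcomm m)

variable {k : Type*} [DivisionRing k] [Module k V]

lemma plusProj_mem_Zgrp
    (hcomm : ∀ m (φ : Cochain A V m), hochWadj (m + 1) (hochB m φ) = hochB m (hochWadj m φ))
    {n : ℕ} {φ : Cochain A V n} (hφ : φ ∈ Zgrp A V n) :
    plusProj k (WHom A V n) φ ∈ Zgrp A V n :=
  plusProj_mem_ker (W := WHom A V n) (WH := WHom A V (n + 1)) (hcomm n) hφ

lemma plusProj_mem_Bgrp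
    (hcomm : ∀ m (φ : Cochain A V m), hochWadj (m + 1) (hochB m φ) = hochB m (hochWadj m φ))
    {n : ℕ} {φ : Cochain A V n} (hφ : φ ∈ Bgrp A V n) :
    plusProj k (WHom A V n) φ ∈ Bgrp A V n := by
  cases n with
  | zero =>
    rw [Bgrp, AddSubgroup.mem_bot] at hφ ⊢
    rw [hφ, map_zero]
  | succ m => exact plusProj_mem_range (W := WHom A V m) (WH := WHom A V (m + 1)) (hcomm m) hφ

lemma nonempty_addEquiv_HH_prod (k : Type*) [DivisionRing k] [CharZero k] [Module k V]
    (hcomm : ∀ m (φ : Cochain A V m), hochWadj (m + 1) (hochB m φ) = hochB m (hochWadj m φ))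
    (n : ℕ) : Nonempty (HH A V n ≃+ HHplus A V n × HHminus A V n) := by
  unfold HHplus HHminus
  rw [BgrpP_eq k hcomm, BgrpM_eq k hcomm]
  exact ⟨AddSubgroup.quotientEquivProdOfIdempotent
    (plusProj_plusProj (k := k) (hochWadj_hochWadj n)) mem_ker_sub_id_iff mem_ker_add_id_iff
    (fun _ => plusProj_mem_Zgrp hcomm) (fun _ => plusProj_mem_Bgrp hcomm)⟩

end Cohomology

theorem hochschild_cohomology_dihedral_splitting
    {k A V : Type*}
    [Field k] [CharZero k]
    [Ring A] [StarRing A]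
    [AddCommGroup V] [Module k V] [Module A V] [Module Aᵐᵒᵖ V]
    [StarAddMonoid V]
    (hstar_left : ∀ (a : A) (v : V), star (a • v) = op (star a) • star v)
    (hstar_right : ∀ (a : A) (v : V), star (op a • v) = star a • star v) :
    (∀ (m : ℕ) (φ : Cochain A V m),
        hochWadj (m + 1) (hochB m φ) = hochB m (hochWadj m φ)) ∧
    (∀ n : ℕ, IsCompl (Pgrp A V n) (Mgrp A V n)) ∧
    (∀ n : ℕ, Nonempty (HH A V n ≃+ HHplus A V n × HHminus A V n)) :=
  have hcomm := hochWadj_hochB hstar_left hstar_right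
  ⟨hcomm, isCompl_Pgrp_Mgrp k, nonempty_addEquiv_HH_prod k hcomm⟩
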